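/- arXiv:0809.1461 — 6 statements merged into one kernel-verified Lean document; each statement's English description precedes it below -/
import Mathlib

section
/- Let Γ be a group and Γ₀ ⊆ Γ a subgroup. For x ∈ Γ set X = Γ₀xΓ₀ and Y = Γ₀x⁻¹Γ₀. Then the fiber of the multiplication map m_{X,Y} over the identity element e ∈ Γ (i.e. the set of Γ₀-orbits of pairs (p,q) ∈ X × Y with pq = e, for the action g·(p,q) = (pg⁻¹, gq)) is in natural bijection with the set of right cosets pΓ₀ contained in X. Consequently, if for all pairs of double cosets X', Y' of Γ₀ every fiber of m_{X',Y'} is finite, then for every x ∈ Γ the double coset Γ₀xΓ₀ is a union of finitely many right cosets of Γ₀. -/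
/-- The double coset `Γ₀ x Γ₀` of `x` with respect to the subgroup `Γ₀`. -/
def doubleCoset {Γ : Type*} [Group Γ] (Γ₀ : Subgroup Γ) (x : Γ) : Set Γ :=
  {g | ∃ a ∈ Γ₀, ∃ b ∈ Γ₀, g = a * x * b}

/-- The orbit relation on the fiber of the multiplication map `m_{X,Y}` over `z`:
`(p, q)` is identified with `(p * g⁻¹, g * q)` for `g ∈ Γ₀`. -/
def fiberRel {Γ : Type*} [Group Γ] (Γ₀ : Subgroup Γ) (X Y : Set Γ) (z : Γ) :
    {pq : Γ × Γ // pq.1 ∈ X ∧ pq.2 ∈ Y ∧ pq.1 * pq.2 = z} →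
    {pq : Γ × Γ // pq.1 ∈ X ∧ pq.2 ∈ Y ∧ pq.1 * pq.2 = z} → Prop :=
  fun p q => ∃ g ∈ Γ₀, q.1.1 = p.1.1 * g⁻¹ ∧ q.1.2 = g * p.1.2

/-!
A point of the fiber of `m_{X,Y}` over `z` is a pair `(p, p⁻¹ z)`, so it is determined by `p`, and
two such points lie in the same `Γ₀`-orbit exactly when their first coordinates lie in the same
coset `pΓ₀`. Hence the orbits in the fiber correspond to the cosets `pΓ₀` meeting the admissible
first coordinates; over `z = 1` with `Y ⊇ X⁻¹` (true for `X = Γ₀xΓ₀`, `Y = Γ₀x⁻¹Γ₀`) these are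
all cosets `pΓ₀ ⊆ X`.
-/

section FiberRel

variable {Γ : Type*} [Group Γ] (Γ₀ : Subgroup Γ) {X Y : Set Γ}

theorem fiberRel_iff_mk_fst_eq {z : Γ}
    {a b : {pq : Γ × Γ // pq.1 ∈ X ∧ pq.2 ∈ Y ∧ pq.1 * pq.2 = z}} :
    fiberRel Γ₀ X Y z a b ↔ (a.1.1 : Γ ⧸ Γ₀) = b.1.1 := by
  rw [eq_comm, QuotientGroup.eq]
  constructor
  · rintro ⟨g, hg, h1, -⟩
    simpa [h1] using Γ₀.inv_mem hg
  · intro h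
    refine ⟨b.1.1⁻¹ * a.1.1, h, by group, ?_⟩
    rw [eq_inv_mul_of_mul_eq a.2.2.2, eq_inv_mul_of_mul_eq b.2.2.2]
    group

noncomputable def quotFiberRelOneEquiv (hXY : ∀ p ∈ X, p⁻¹ ∈ Y) :
    Quot (fiberRel Γ₀ X Y 1) ≃ ↥((QuotientGroup.mk (s := Γ₀)) '' X) :=
  Equiv.ofBijective
    (Quot.lift (fun a => ⟨QuotientGroup.mk a.1.1, a.1.1, a.2.1, rfl⟩)
      fun _ _ h => Subtype.ext ((fiberRel_iff_mk_fst_eq Γ₀).1 h))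
    ⟨by
      rintro ⟨a⟩ ⟨b⟩ h
      exact Quot.sound ((fiberRel_iff_mk_fst_eq Γ₀).2 (congrArg Subtype.val h)),
    by
      rintro ⟨-, p, hp, rfl⟩
      exact ⟨Quot.mk _ ⟨(p, p⁻¹), hp, hXY p hp, mul_inv_cancel p⟩, rfl⟩⟩

end FiberRel

theorem inv_mem_doubleCoset_inv {Γ : Type*} [Group Γ] (Γ₀ : Subgroup Γ) {x g : Γ}
    (hg : g ∈ doubleCoset Γ₀ x) : g⁻¹ ∈ doubleCoset Γ₀ x⁻¹ := by
  obtain ⟨a, ha, b, hb, rfl⟩ := hg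
  exact ⟨b⁻¹, Γ₀.inv_mem hb, a⁻¹, Γ₀.inv_mem ha, by group⟩

/-- For `X = Γ₀xΓ₀` and `Y = Γ₀x⁻¹Γ₀`, the fiber of `m_{X,Y}` over the identity is in natural
bijection with the set of right cosets `pΓ₀` contained in `X` (i.e. the image of `X` in
`Γ ⧸ Γ₀`).  Consequently, if all fibers of all multiplication maps between double cosets are
finite, then every double coset is a finite union of right cosets of `Γ₀`. -/
theorem stmt2 {Γ : Type*} [Group Γ] (Γ₀ : Subgroup Γ) :
    (∀ x : Γ,
      Nonempty (Quot (fiberRel Γ₀ (doubleCoset Γ₀ x) (doubleCoset Γ₀ x⁻¹) 1) ≃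
        ↥((QuotientGroup.mk (s := Γ₀)) '' doubleCoset Γ₀ x))) ∧
    ((∀ x y z : Γ, Finite (Quot (fiberRel Γ₀ (doubleCoset Γ₀ x) (doubleCoset Γ₀ y) z))) →
      ∀ x : Γ, ((QuotientGroup.mk (s := Γ₀)) '' doubleCoset Γ₀ x).Finite) := by
  have equiv x := quotFiberRelOneEquiv Γ₀ fun _ => inv_mem_doubleCoset_inv Γ₀ (x := x)
  refine ⟨fun x => ⟨equiv x⟩, fun hfin x => ?_⟩
  have _ := hfin x x⁻¹ 1
  have _ := Finite.of_equiv _ (equiv x)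
  exact Set.toFinite _
end

section
/- Let Λ be an abelian group and b : Λ × Λ → ℤ a biadditive form. Then the multiplication (a₁,λ₁,μ₁,k₁)·(a₂,λ₂,μ₂,k₂) = (a₁ + a₂ + b(λ₁,μ₂) − b(μ₁,λ₂) + k₁·b(λ₁,λ₂), λ₁ + λ₂, μ₁ + μ₂ + k₁·λ₂, k₁ + k₂) makes the set ℤ × Λ × Λ × ℤ into a group: it is associative, (0,0,0,0) is a two-sided identity, and every element has a two-sided inverse. -/
/-!
The last three coordinates form the group `(Λ × Λ) ⋊ ℤ`, with `k` acting by
`(λ, μ) ↦ (λ, μ + k • λ)`, and the first coordinate is a central extension of it by the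
cocycle `b(λ₁, μ₂) - b(μ₁, λ₂) + k₁ b(λ₁, λ₂)`. Once `b` is bundled as an element of
`Λ →+ Λ →+ ℤ`, associativity and the identity and inverse laws are coordinatewise
normalisations in `ℤ` and in `Λ`.
-/

/-- The multiplication on `Γ̃ = ℤ × Λ × Λ × ℤ`:
`(a₁,λ₁,μ₁,k₁)·(a₂,λ₂,μ₂,k₂) = (a₁+a₂+b(λ₁,μ₂)−b(μ₁,λ₂)+k₁·b(λ₁,λ₂), λ₁+λ₂, μ₁+μ₂+k₁·λ₂, k₁+k₂)`. -/
def gtMul {Λ : Type*} [AddCommGroup Λ] (b : Λ → Λ → ℤ) :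
    ℤ × Λ × Λ × ℤ → ℤ × Λ × Λ × ℤ → ℤ × Λ × Λ × ℤ :=
  fun p q =>
    (p.1 + q.1 + b p.2.1 q.2.2.1 - b p.2.2.1 q.2.1 + p.2.2.2 * b p.2.1 q.2.1,
     p.2.1 + q.2.1,
     p.2.2.1 + q.2.2.1 + p.2.2.2 • q.2.1,
     p.2.2.2 + q.2.2.2)

def biadditiveHom {Λ : Type*} [AddCommGroup Λ] (b : Λ → Λ → ℤ)
    (hbl : ∀ l₁ l₂ m : Λ, b (l₁ + l₂) m = b l₁ m + b l₂ m)
    (hbr : ∀ l m₁ m₂ : Λ, b l (m₁ + m₂) = b l m₁ + b l m₂) : Λ →+ Λ →+ ℤ :=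
  AddMonoidHom.mk' (fun l => AddMonoidHom.mk' (b l) (hbr l))
    fun l₁ l₂ => AddMonoidHom.ext (hbl l₁ l₂)

def gtInv {Λ : Type*} [AddCommGroup Λ] (b : Λ → Λ → ℤ) (p : ℤ × Λ × Λ × ℤ) :
    ℤ × Λ × Λ × ℤ :=
  (-p.1 + b p.2.1 p.2.2.1 - b p.2.2.1 p.2.1, -p.2.1, -p.2.2.1 + p.2.2.2 • p.2.1, -p.2.2.2)

section Biadditive

variable {Λ : Type*} [AddCommGroup Λ] (B : Λ →+ Λ →+ ℤ)

theorem gtMul_assoc (p q r : ℤ × Λ × Λ × ℤ) :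
    gtMul (B · ·) (gtMul (B · ·) p q) r = gtMul (B · ·) p (gtMul (B · ·) q r) := by
  obtain ⟨a₁, l₁, m₁, k₁⟩ := p
  obtain ⟨a₂, l₂, m₂, k₂⟩ := q
  obtain ⟨a₃, l₃, m₃, k₃⟩ := r
  simp only [gtMul, Prod.mk.injEq, map_add, map_zsmul, AddMonoidHom.add_apply,
    AddMonoidHom.smul_apply, smul_eq_mul]
  refine ⟨by ring, by abel, ?_, by ring⟩
  rw [add_smul, smul_add]
  abel

theorem gtMul_zero_left (p : ℤ × Λ × Λ × ℤ) : gtMul (B · ·) (0, 0, 0, 0) p = p := by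
  simp [gtMul]

theorem gtMul_zero_right (p : ℤ × Λ × Λ × ℤ) : gtMul (B · ·) p (0, 0, 0, 0) = p := by
  simp [gtMul]

theorem gtMul_gtInv (p : ℤ × Λ × Λ × ℤ) : gtMul (B · ·) p (gtInv (B · ·) p) = (0, 0, 0, 0) := by
  obtain ⟨a, l, m, k⟩ := p
  simp only [gtMul, gtInv, Prod.mk.injEq, map_add, map_neg, map_zsmul, smul_eq_mul]
  refine ⟨by ring, by abel, ?_, by ring⟩
  rw [smul_neg]
  abel

theorem gtInv_gtMul (p : ℤ × Λ × Λ × ℤ) : gtMul (B · ·) (gtInv (B · ·) p) p = (0, 0, 0, 0) := by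
  obtain ⟨a, l, m, k⟩ := p
  simp only [gtMul, gtInv, Prod.mk.injEq, map_add, map_neg, map_zsmul, AddMonoidHom.add_apply,
    AddMonoidHom.neg_apply, AddMonoidHom.smul_apply, smul_eq_mul]
  refine ⟨by ring, by abel, ?_, by ring⟩
  rw [neg_smul]
  abel

end Biadditive

/-- The multiplication `gtMul b` makes `ℤ × Λ × Λ × ℤ` into a group: it is associative,
`(0,0,0,0)` is a two-sided identity, and every element has a two-sided inverse. -/
theorem stmt5 {Λ : Type*} [AddCommGroup Λ] (b : Λ → Λ → ℤ)
    (hbl : ∀ l₁ l₂ m : Λ, b (l₁ + l₂) m = b l₁ m + b l₂ m)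
    (hbr : ∀ l m₁ m₂ : Λ, b l (m₁ + m₂) = b l m₁ + b l m₂) :
    (∀ p q r : ℤ × Λ × Λ × ℤ, gtMul b (gtMul b p q) r = gtMul b p (gtMul b q r)) ∧
    (∀ p : ℤ × Λ × Λ × ℤ, gtMul b (0, 0, 0, 0) p = p ∧ gtMul b p (0, 0, 0, 0) = p) ∧
    (∀ p : ℤ × Λ × Λ × ℤ, ∃ q : ℤ × Λ × Λ × ℤ,
      gtMul b p q = (0, 0, 0, 0) ∧ gtMul b q p = (0, 0, 0, 0)) := by
  let B := biadditiveHom b hbl hbr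
  exact ⟨gtMul_assoc B, fun p => ⟨gtMul_zero_left B p, gtMul_zero_right B p⟩,
    fun p => ⟨gtInv b p, gtMul_gtInv B p, gtInv_gtMul B p⟩⟩
end

section
/- Let Λ be an abelian group, b : Λ × Λ → ℤ biadditive, Γ̃ the group ℤ × Λ × Λ × ℤ with multiplication (a₁,λ₁,μ₁,k₁)·(a₂,λ₂,μ₂,k₂) = (a₁+a₂+b(λ₁,μ₂)−b(μ₁,λ₂)+k₁b(λ₁,λ₂), λ₁+λ₂, μ₁+μ₂+k₁λ₂, k₁+k₂), and Γ̃₀ = {(0,λ,0,0) : λ ∈ Λ}. Fix k ∈ ℤ. Then (i) the assignment ν·(a,μ) = (a − b(ν,μ) − b(μ,ν) − k·b(ν,ν), μ + kν) defines an action of the additive group Λ on the set ℤ × Λ, and (ii) the map (a,μ) ↦ Γ̃₀·(a,0,μ,k)·Γ̃₀ induces a bijection from the orbit set (ℤ × Λ)/Λ of this action onto the set of Γ̃₀-double cosets of elements of Γ̃ whose last coordinate equals k. -/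
/-- For fixed `k`, the assignment `ν·(a,μ) = (a − b(ν,μ) − b(μ,ν) − k·b(ν,ν), μ + kν)`. -/
def actK {Λ : Type*} [AddCommGroup Λ] (b : Λ → Λ → ℤ) (k : ℤ) :
    Λ → ℤ × Λ → ℤ × Λ :=
  fun ν p => (p.1 - b ν p.2 - b p.2 ν - k * b ν ν, p.2 + k • ν)

def Quot.equivOfLeftInverse {α β : Sort*} {r : α → α → Prop} {s : β → β → Prop}
    (f : α → β) (g : β → α) (hf : ∀ x y, r x y → s (f x) (f y))
    (hg : ∀ x y, s x y → r (g x) (g y)) (hgf : ∀ x, g (f x) = x) (hfg : ∀ y, s y (f (g y))) :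
    Quot r ≃ Quot s where
  toFun := Quot.map f hf
  invFun := Quot.map g hg
  left_inv := Quot.ind fun x => congrArg _ (hgf x)
  right_inv := Quot.ind fun y => (Quot.sound (hfg y)).symm

section

variable {Λ : Type*} [AddCommGroup Λ] (B : Λ →+ Λ →+ ℤ)

theorem actK_zero (k : ℤ) (p : ℤ × Λ) : actK (B · ·) k 0 p = p := by
  simp [actK]

theorem actK_add (k : ℤ) (ν ν' : Λ) (p : ℤ × Λ) :
    actK (B · ·) k (ν + ν') p = actK (B · ·) k ν (actK (B · ·) k ν' p) := by
  simp only [actK, map_add, AddMonoidHom.add_apply, map_zsmul, AddMonoidHom.smul_apply,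
    smul_eq_mul, Prod.mk.injEq]
  constructor
  · ring
  · rw [smul_add]; abel

theorem gtMul_lattice_left (ν : Λ) (g : ℤ × Λ × Λ × ℤ) :
    gtMul (B · ·) (0, ν, 0, 0) g = (g.1 + B ν g.2.2.1, ν + g.2.1, g.2.2.1, g.2.2.2) := by
  simp [gtMul]

theorem gtMul_lattice_right (g : ℤ × Λ × Λ × ℤ) (ν : Λ) :
    gtMul (B · ·) g (0, ν, 0, 0) =
      (g.1 - B g.2.2.1 ν + g.2.2.2 * B g.2.1 ν, g.2.1 + ν, g.2.2.1 + g.2.2.2 • ν, g.2.2.2) := by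
  simp [gtMul]

def gtNormalForm (b : Λ → Λ → ℤ) (g : ℤ × Λ × Λ × ℤ) : ℤ × Λ := (g.1 - b g.2.1 g.2.2.1, g.2.2.1)

theorem gtNormalForm_lattice_mul_mul (ν₁ ν₂ : Λ) (g : ℤ × Λ × Λ × ℤ) :
    gtNormalForm (B · ·) (gtMul (B · ·) (gtMul (B · ·) (0, ν₁, 0, 0) g) (0, ν₂, 0, 0)) =
      actK (B · ·) g.2.2.2 ν₂ (gtNormalForm (B · ·) g) := by
  simp only [gtNormalForm, gtMul_lattice_left, gtMul_lattice_right, actK, map_add,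
    AddMonoidHom.add_apply, map_zsmul, smul_eq_mul, Prod.mk.injEq]
  exact ⟨by ring, trivial⟩

theorem gtNormalForm_mk (a : ℤ) (μ : Λ) (k : ℤ) : gtNormalForm (B · ·) (a, 0, μ, k) = (a, μ) := by
  simp [gtNormalForm]

theorem mk_actK_eq_lattice_mul_mul (k : ℤ) (p : ℤ × Λ) (ν : Λ) :
    ((actK (B · ·) k ν p).1, (0 : Λ), (actK (B · ·) k ν p).2, k) =
      gtMul (B · ·) (gtMul (B · ·) (0, -ν, 0, 0) (p.1, 0, p.2, k)) (0, ν, 0, 0) := by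
  simp only [actK, gtMul_lattice_left, gtMul_lattice_right, map_neg, AddMonoidHom.neg_apply,
    add_zero, mul_neg, neg_add_cancel, Prod.mk.injEq, and_true]
  ring

theorem mk_gtNormalForm_eq_lattice_mul_mul (g : ℤ × Λ × Λ × ℤ) :
    ((gtNormalForm (B · ·) g).1, (0 : Λ), (gtNormalForm (B · ·) g).2, g.2.2.2) =
      gtMul (B · ·) (gtMul (B · ·) (0, -g.2.1, 0, 0) g) (0, 0, 0, 0) := by
  simp [gtNormalForm, gtMul_lattice_left, gtMul_lattice_right, sub_eq_add_neg]

end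

/-- (i) `actK b k` is an action of the additive group `Λ` on `ℤ × Λ`, and (ii) the map
`(a,μ) ↦ Γ̃₀·(a,0,μ,k)·Γ̃₀` induces a bijection from the orbit set of this action onto the set of
`Γ̃₀`-double cosets of elements of `Γ̃` whose last coordinate equals `k`. -/
theorem stmt8 {Λ : Type*} [AddCommGroup Λ] (b : Λ → Λ → ℤ)
    (hbl : ∀ l₁ l₂ m : Λ, b (l₁ + l₂) m = b l₁ m + b l₂ m)
    (hbr : ∀ l m₁ m₂ : Λ, b l (m₁ + m₂) = b l m₁ + b l m₂)
    (k : ℤ) :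
    ((∀ p : ℤ × Λ, actK b k 0 p = p) ∧
      (∀ (ν ν' : Λ) (p : ℤ × Λ), actK b k (ν + ν') p = actK b k ν (actK b k ν' p))) ∧
    ∃ e : Quot (fun p q : ℤ × Λ => ∃ ν : Λ, q = actK b k ν p) ≃
        Quot (fun g g' : {g : ℤ × Λ × Λ × ℤ // g.2.2.2 = k} =>
          ∃ ν₁ ν₂ : Λ, (g' : ℤ × Λ × Λ × ℤ) =
            gtMul b (gtMul b ((0 : ℤ), ν₁, (0 : Λ), (0 : ℤ)) (g : ℤ × Λ × Λ × ℤ))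
              ((0 : ℤ), ν₂, (0 : Λ), (0 : ℤ))),
      ∀ (a : ℤ) (μ : Λ),
        e (Quot.mk _ (a, μ)) = Quot.mk _ ⟨(a, (0 : Λ), μ, k), rfl⟩ := by
  obtain ⟨B, rfl⟩ : ∃ B : Λ →+ Λ →+ ℤ, b = (B · ·) :=
    ⟨AddMonoidHom.mk' (fun l => AddMonoidHom.mk' (b l) (hbr l))
      (fun l₁ l₂ => AddMonoidHom.ext (hbl l₁ l₂)), rfl⟩
  refine ⟨⟨actK_zero B k, actK_add B k⟩,
    Quot.equivOfLeftInverse (fun p => ⟨(p.1, 0, p.2, k), rfl⟩) (fun g => gtNormalForm _ g.1)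
      ?_ ?_ (fun p => gtNormalForm_mk B p.1 p.2 k) ?_, fun _ _ => rfl⟩
  · rintro p _ ⟨ν, rfl⟩
    exact ⟨-ν, ν, mk_actK_eq_lattice_mul_mul B k p ν⟩
  · rintro ⟨g, rfl⟩ ⟨g', _⟩ ⟨ν₁, ν₂, rfl : g' = _⟩
    exact ⟨ν₂, gtNormalForm_lattice_mul_mul B ν₁ ν₂ g⟩
  · rintro ⟨g, rfl⟩
    exact ⟨-g.2.1, 0, mk_gtNormalForm_eq_lattice_mul_mul B g⟩
end

section
/- Let b : ℤ^l × ℤ^l → ℤ be a ℤ-bilinear form such that Q(λ,μ) = b(λ,μ) + b(μ,λ) is negative definite. Fix an integer k ≥ 1 and consider the action of ℤ^l on ℤ × ℤ^l given by ν·(a,μ) = (a − b(ν,μ) − b(μ,ν) − k·b(ν,ν), μ + kν). Then for every (a₀,μ₀) ∈ ℤ × ℤ^l: (i) there exists A ∈ ℤ such that every point (a,μ) in the ℤ^l-orbit of (a₀,μ₀) satisfies a ≥ A; and (ii) for every fixed a ∈ ℤ, the set of μ ∈ ℤ^l with (a,μ) in the orbit of (a₀,μ₀) is finite. -/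
/-!
Write `Q = -(b + bᵀ)`, a positive definite symmetric form. Since `2 b(ν, ν) = -Q(ν, ν)`, the point
`ν · (a₀, μ₀) = (a, μ)` satisfies `2 (a - a₀) = 2 Q(ν, μ₀) + k Q(ν, ν)`. Cauchy–Schwarz and AM–GM
give `2 |Q(ν, μ₀)| ≤ Q(ν, ν) + Q(μ₀, μ₀)`, which bounds `a` below, and, applied to `ν` and `2 μ₀`,
bounds `Q(ν, ν)` once `a` is fixed. A positive definite form on `ℤ^l` has only finitely many
vectors of bounded norm: `ν ↦ (Q(ν, eᵢ))ᵢ` is injective by definiteness, and its coordinates are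
bounded by Cauchy–Schwarz again.
-/

open LinearMap (BilinForm)

theorem two_mul_abs_le_add_of_sq_le_mul {R : Type*} [CommRing R] [LinearOrder R]
    [IsStrictOrderedRing R] {s p q : R} (h : s ^ 2 ≤ p * q) (hp : 0 ≤ p) (hq : 0 ≤ q) :
    2 * |s| ≤ p + q := by
  rw [← abs_two, ← abs_mul]
  refine abs_le_of_sq_le_sq ?_ (add_nonneg hp hq)
  calc (2 * s) ^ 2 = 4 * s ^ 2 := by ring
    _ ≤ 4 * p * q := by rw [mul_assoc]; gcongr
    _ ≤ (p + q) ^ 2 := four_mul_le_sq_add p q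

namespace LinearMap.BilinForm

theorem apply_self_nonneg_of_pos {R M : Type*} [CommRing R] [PartialOrder R] [AddCommGroup M]
    [Module R M] {B : BilinForm R M} (hp : ∀ x, x ≠ 0 → 0 < B x x) (x : M) : 0 ≤ B x x := by
  rcases eq_or_ne x 0 with rfl | hx
  · simp
  · exact (hp x hx).le

theorem two_mul_abs_apply_le {R M : Type*} [CommRing R] [LinearOrder R] [IsStrictOrderedRing R]
    [AddCommGroup M] [Module R M] {B : BilinForm R M} (hs : ∀ x, 0 ≤ B x x)
    (hB : LinearMap.IsSymm B) (x y : M) : 2 * |B x y| ≤ B x x + B y y :=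
  two_mul_abs_le_add_of_sq_le_mul (apply_sq_le_of_symm B hs hB x y) (hs x) (hs y)

theorem finite_setOf_apply_self_le {ι : Type*} [Fintype ι] [DecidableEq ι]
    {B : BilinForm ℤ (ι → ℤ)} (hp : ∀ x, x ≠ 0 → 0 < B x x) (hB : LinearMap.IsSymm B) (C : ℤ) :
    {x | B x x ≤ C}.Finite := by
  set F : (ι → ℤ) → ι → ℤ := fun x i => B x (Pi.single i 1)
  have hF : F.Injective := by
    intro x y hxy
    have hker : B (x - y) = 0 := (Pi.basisFun ℤ ι).ext fun i => by
      simpa [F, sub_eq_zero] using congrFun hxy i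
    by_contra hne
    exact (hp _ (sub_ne_zero.2 hne)).ne' (by simp [hker])
  set M : ι → ℤ := fun i => C + B (Pi.single i 1) (Pi.single i 1)
  refine ((Set.finite_Icc (-M) M).preimage hF.injOn).subset fun x (hx : B x x ≤ C) => ?_
  have hbound i : |F x i| ≤ M i := by
    have hCS := two_mul_abs_apply_le (apply_self_nonneg_of_pos hp) hB x (Pi.single i 1)
    simp only [F, M]
    linarith [abs_nonneg (B x (Pi.single i 1)), apply_self_nonneg_of_pos hp (Pi.single i 1)]
  exact ⟨fun i => (abs_le.1 (hbound i)).1, fun i => (abs_le.1 (hbound i)).2⟩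

end LinearMap.BilinForm

open LinearMap.BilinForm

/-- Let `b` be a `ℤ`-bilinear form on `ℤ^l` with `Q(λ,μ) = b(λ,μ) + b(μ,λ)` negative definite,
and let `k ≥ 1`.  For the action `ν·(a,μ) = (a − b(ν,μ) − b(μ,ν) − k·b(ν,ν), μ + kν)` of `ℤ^l`
on `ℤ × ℤ^l`: (i) on each orbit the first coordinate is bounded below, and (ii) for each fixed
`a`, only finitely many `μ` occur with `(a,μ)` in a given orbit. -/
theorem stmt12 {l : ℕ} (b : (Fin l → ℤ) →ₗ[ℤ] (Fin l → ℤ) →ₗ[ℤ] ℤ)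
    (hneg : ∀ ν : Fin l → ℤ, ν ≠ 0 → b ν ν + b ν ν < 0)
    (k : ℤ) (hk : 1 ≤ k) (a₀ : ℤ) (μ₀ : Fin l → ℤ) :
    (∃ A : ℤ, ∀ (a : ℤ) (μ : Fin l → ℤ),
        (∃ ν : Fin l → ℤ,
          (a, μ) = (a₀ - b ν μ₀ - b μ₀ ν - k * b ν ν, μ₀ + k • ν)) → A ≤ a) ∧
    ∀ a : ℤ, {μ : Fin l → ℤ | ∃ ν : Fin l → ℤ,
        (a, μ) = (a₀ - b ν μ₀ - b μ₀ ν - k * b ν ν, μ₀ + k • ν)}.Finite := by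
  set Q : BilinForm ℤ (Fin l → ℤ) := -(b + b.flip)
  have hQ : LinearMap.IsSymm Q := LinearMap.isSymm_def.2 fun x y => by simp [Q, add_comm]
  have hQpos : ∀ ν, ν ≠ 0 → 0 < Q ν ν := fun ν hν => by simpa [Q] using hneg ν hν
  have hQnonneg := apply_self_nonneg_of_pos hQpos
  have horbit ν : 2 * (a₀ - b ν μ₀ - b μ₀ ν - k * b ν ν - a₀) = 2 * Q ν μ₀ + k * Q ν ν := by
    simp only [Q, LinearMap.neg_apply, LinearMap.add_apply, LinearMap.flip_apply]; ring
  have hkQ ν : Q ν ν ≤ k * Q ν ν := le_mul_of_one_le_left (hQnonneg ν) hk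
  refine ⟨⟨a₀ - Q μ₀ μ₀, ?_⟩, fun a => ?_⟩
  · rintro a μ ⟨ν, h⟩
    obtain ⟨rfl, -⟩ := Prod.mk.inj h
    have hCS := two_mul_abs_apply_le hQnonneg hQ ν μ₀
    linarith [horbit ν, hkQ ν, neg_abs_le (Q ν μ₀), hQnonneg μ₀]
  · refine ((finite_setOf_apply_self_le hQpos hQ (4 * (a - a₀) + 4 * Q μ₀ μ₀)).image
      fun ν => μ₀ + k • ν).subset ?_
    rintro μ ⟨ν, h⟩
    obtain ⟨rfl, rfl⟩ := Prod.mk.inj h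
    refine ⟨ν, ?_, rfl⟩
    have hCS := two_mul_abs_apply_le hQnonneg hQ ν ((2 : ℤ) • μ₀)
    simp only [map_smul, LinearMap.smul_apply, smul_eq_mul, abs_mul, abs_two] at hCS
    show Q ν ν ≤ _
    linarith [horbit ν, hkQ ν, neg_abs_le (Q ν μ₀)]
end

section
/- Let b : ℤ^l × ℤ^l → ℤ be a ℤ-bilinear form such that Q(λ,μ) = b(λ,μ) + b(μ,λ) is negative definite. Let Γ̃ be the group ℤ × ℤ^l × ℤ^l × ℤ with multiplication (a₁,λ₁,μ₁,k₁)·(a₂,λ₂,μ₂,k₂) = (a₁+a₂+b(λ₁,μ₂)−b(μ₁,λ₂)+k₁b(λ₁,λ₂), λ₁+λ₂, μ₁+μ₂+k₁λ₂, k₁+k₂), let Γ̃₀ = {(0,λ,0,0)}, let Γ̃⁺ = {(a,λ,0,0) : a ∈ ℤ, λ ∈ ℤ^l} ∪ {(a,λ,μ,k) : k > 0}, and let c = (1,0,0,0) (a central element). Then Γ̃⁺ is a subsemigroup of Γ̃ containing Γ̃₀, and the pair (Γ̃⁺, Γ̃₀) is almost good; that is, for any x, y ∈ Γ̃⁺ with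 X = Γ̃₀xΓ̃₀ and Y = Γ̃₀yΓ̃₀: (1') there is a finite subset F ⊆ Γ̃⁺ such that every product pq with p ∈ X, q ∈ Y lies in Γ̃₀·cⁿ·f·Γ̃₀ for some integer n ≥ 0 and some f ∈ F; and (2) for every z ∈ Γ̃, the set of Γ̃₀-orbits of pairs (p,q) ∈ X × Y with pq = z (for the action g·(p,q) = (pg⁻¹, gq)) is finite. -/
/-- Membership in the subgroup `Γ̃₀ = {(0,ν,0,0) : ν ∈ Λ}`. -/
def isGamma0 {Λ : Type*} [AddCommGroup Λ] (g : ℤ × Λ × Λ × ℤ) : Prop :=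
  ∃ ν : Λ, g = ((0 : ℤ), ν, (0 : Λ), (0 : ℤ))

/-- Membership in the sub-semigroup `Γ̃⁺ = {(a,λ,0,0)} ∪ {(a,λ,μ,k) : k > 0}`. -/
def isPlus {Λ : Type*} [AddCommGroup Λ] (g : ℤ × Λ × Λ × ℤ) : Prop :=
  (∃ (a : ℤ) (lam : Λ), g = (a, lam, (0 : Λ), (0 : ℤ))) ∨ 0 < g.2.2.2

/-- The double coset `Γ̃₀ · x · Γ̃₀`. -/
def dcoset {Λ : Type*} [AddCommGroup Λ] (b : Λ → Λ → ℤ) (x : ℤ × Λ × Λ × ℤ) :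
    Set (ℤ × Λ × Λ × ℤ) :=
  {p | ∃ ν₁ ν₂ : Λ,
    p = gtMul b (gtMul b ((0 : ℤ), ν₁, (0 : Λ), (0 : ℤ)) x) ((0 : ℤ), ν₂, (0 : Λ), (0 : ℤ))}

/-- The `Γ̃₀`-orbit relation on the fiber of the multiplication map over `z`:
`(p, q)` is identified with `(p·g⁻¹, g·q)` for `g = (0,ν,0,0) ∈ Γ̃₀`. -/
def gtFiberRel {Λ : Type*} [AddCommGroup Λ] (b : Λ → Λ → ℤ)
    (X Y : Set (ℤ × Λ × Λ × ℤ)) (z : ℤ × Λ × Λ × ℤ) :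
    {pq : (ℤ × Λ × Λ × ℤ) × (ℤ × Λ × Λ × ℤ) //
        pq.1 ∈ X ∧ pq.2 ∈ Y ∧ gtMul b pq.1 pq.2 = z} →
    {pq : (ℤ × Λ × Λ × ℤ) × (ℤ × Λ × Λ × ℤ) //
        pq.1 ∈ X ∧ pq.2 ∈ Y ∧ gtMul b pq.1 pq.2 = z} → Prop :=
  fun p q => ∃ ν : Λ,
    q.1.1 = gtMul b p.1.1 ((0 : ℤ), -ν, (0 : Λ), (0 : ℤ)) ∧
    q.1.2 = gtMul b ((0 : ℤ), ν, (0 : Λ), (0 : ℤ)) p.1.2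

open Filter Finset Matrix

theorem Quot.finite_of_forall_exists {α ι : Type*} [Finite ι] {r : α → α → Prop}
    (P : ι → α → Prop) (hcov : ∀ a, ∃ i, P i a) (hrel : ∀ i a a', P i a → P i a' → r a a') :
    Finite (Quot r) := by
  choose f hf using hcov
  refine Finite.of_surjective (Quot.mk r ∘ Set.rangeSplitting f) fun q => ?_
  induction q using Quot.ind with
  | mk a =>
    refine ⟨Set.rangeFactorization f a, Quot.sound (hrel (f a) _ _ ?_ (hf a))⟩
    have h := hf (Set.rangeSplitting f (Set.rangeFactorization f a))
    rwa [Set.apply_rangeSplitting f] at h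

theorem exists_mem_piFinset_Ico_add_smul {ι : Type*} [Fintype ι] [DecidableEq ι] {K : ℤ}
    (hK : 0 < K) (ν : ι → ℤ) :
    ∃ r ∈ Fintype.piFinset fun _ => Ico 0 K, ∃ w : ι → ℤ, ν = r + K • w :=
  ⟨fun i => ν i % K,
    Fintype.mem_piFinset.2 fun _ => mem_Ico.2 ⟨Int.emod_nonneg _ hK.ne', Int.emod_lt_of_pos _ hK⟩,
    fun i => ν i / K, funext fun i => (Int.emod_add_mul_ediv (ν i) K).symm⟩

theorem LinearMap.BilinForm.det_toMatrix₂'_ne_zero {n R : Type*} [Fintype n] [DecidableEq n]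
    [CommRing R] [IsDomain R] (P : LinearMap.BilinForm R (n → R))
    (hP : ∀ v, v ≠ 0 → P v v ≠ 0) : (LinearMap.toMatrix₂' R P).det ≠ 0 := fun h => by
  obtain ⟨v, hv, hMv⟩ := Matrix.exists_mulVec_eq_zero_iff.mpr h
  refine hP v hv ?_
  rw [← Matrix.toLinearMap₂'_toMatrix' (R := R) P, Matrix.toLinearMap₂'_apply', hMv,
    dotProduct_zero]

theorem LinearMap.BilinForm.exists_sum_sq_le_mul_apply_self {n : Type*} [Fintype n]
    [DecidableEq n] (P : LinearMap.BilinForm ℤ (n → ℤ)) (hP : LinearMap.IsSymm P)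
    (hpos : ∀ v, v ≠ 0 → 0 < P v v) : ∃ c : ℤ, 0 ≤ c ∧ ∀ w, ∑ i, w i ^ 2 ≤ c * P w w := by
  have hP_nonneg : ∀ w, 0 ≤ P w w := fun w => by
    rcases eq_or_ne w 0 with rfl | hw
    exacts [by simp, (hpos w hw).le]
  set M := LinearMap.toMatrix₂' ℤ P
  have hPM : ∀ v w, P v w = v ⬝ᵥ (M *ᵥ w) := fun v w => by
    rw [← Matrix.toLinearMap₂'_apply', Matrix.toLinearMap₂'_toMatrix']
  have hdet_sq : 1 ≤ M.det ^ 2 := by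
    have : M.det ≠ 0 := P.det_toMatrix₂'_ne_zero fun v hv => (hpos v hv).ne'
    have : 0 < M.det ^ 2 := by positivity
    omega
  set A := ∑ i, ∑ j, M.adjugate i j ^ 2
  have hA : 0 ≤ A := by positivity
  refine ⟨A * M.trace, mul_nonneg hA (sum_nonneg fun j _ => hP_nonneg (Pi.single j 1)),
    fun w => ?_⟩
  have hcs : ∀ j, (M *ᵥ w) j ^ 2 ≤ M j j * P w w := fun j => by
    have := P.apply_sq_le_of_symm hP_nonneg hP (Pi.single j 1) w
    rwa [hPM (Pi.single j 1) w, single_one_dotProduct] at this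
  -- `w` is recovered from `M *ᵥ w` through the adjugate, and `(M *ᵥ w) j = P eⱼ w` is
  -- controlled by Cauchy–Schwarz for `P`.
  have hadj : M.adjugate *ᵥ (M *ᵥ w) = M.det • w := by
    rw [mulVec_mulVec, adjugate_mul, smul_mulVec, one_mulVec]
  calc ∑ i, w i ^ 2 ≤ M.det ^ 2 * ∑ i, w i ^ 2 :=
        le_mul_of_one_le_left (sum_nonneg fun i _ => sq_nonneg _) hdet_sq
    _ = ∑ i, (M.adjugate *ᵥ (M *ᵥ w)) i ^ 2 := by simp [hadj, mul_sum, mul_pow]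
    _ ≤ ∑ i, (∑ j, M.adjugate i j ^ 2) * ∑ j, (M *ᵥ w) j ^ 2 :=
        sum_le_sum fun i _ => sum_mul_sq_le_sq_mul_sq univ (M.adjugate i) (M *ᵥ w)
    _ = A * ∑ j, (M *ᵥ w) j ^ 2 := by rw [← sum_mul]
    _ ≤ A * ∑ j, M j j * P w w := mul_le_mul_of_nonneg_left (sum_le_sum fun j _ => hcs j) hA
    _ = A * M.trace * P w w := by rw [← sum_mul, mul_assoc]; rfl

theorem LinearMap.neg_two_mul_mul_apply_le {n : Type*} [Fintype n] [DecidableEq n]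
    (L : (n → ℤ) →ₗ[ℤ] ℤ) (T : ℤ) (ν : n → ℤ) :
    -(2 * T * L ν) ≤ T ^ 2 * ∑ i, L (Pi.single i 1) ^ 2 + ∑ i, ν i ^ 2 := by
  have hLν : L ν = ∑ i, ν i * L (Pi.single i 1) := by
    conv_lhs => rw [← univ_sum_single ν]
    refine (map_sum L _ _).trans (sum_congr rfl fun i _ => ?_)
    rw [← smul_eq_mul, ← map_zsmul, ← Pi.single_smul', smul_eq_mul, mul_one]
  rw [hLν, mul_sum, ← sum_neg_distrib, mul_sum, ← sum_add_distrib]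
  exact sum_le_sum fun i _ => by nlinarith [sq_nonneg (T * L (Pi.single i 1) + ν i)]

theorem tendsto_sub_mul_apply_self_cofinite {n : Type*} [Fintype n] [DecidableEq n]
    (B : (n → ℤ) →ₗ[ℤ] (n → ℤ) →ₗ[ℤ] ℤ) (hB : ∀ ν, ν ≠ 0 → B ν ν < 0)
    (L : (n → ℤ) →ₗ[ℤ] ℤ) {N : ℤ} (hN : 0 < N) :
    Tendsto (fun ν => L ν - N * B ν ν) cofinite atTop := by
  obtain ⟨c, hc, hcB⟩ := LinearMap.BilinForm.exists_sum_sq_le_mul_apply_self (-(B + B.flip))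
    ⟨fun v w => by simp [add_comm]⟩ fun v hv => by simpa using hB v hv
  set T := 2 * c + 1
  set S := ∑ i, L (Pi.single i 1) ^ 2
  rw [tendsto_atTop]
  intro M
  rw [eventually_cofinite]
  set R := 2 * c * (2 * M + T * S)
  refine (Set.finite_Icc (fun _ => -R) fun _ => R).subset fun ν hν => ?_
  simp only [Set.mem_ofPred_eq, not_le] at hν
  have hX : 0 ≤ -B ν ν := by
    rcases eq_or_ne ν 0 with rfl | h
    exacts [by simp, by linarith [hB ν h]]
  have hsum : ∑ i, ν i ^ 2 ≤ 2 * c * -B ν ν := (hcB ν).trans_eq <| by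
    simp only [LinearMap.neg_apply, LinearMap.add_apply, LinearMap.flip_apply]
    ring
  have hbound : -B ν ν ≤ 2 * M + T * S := by
    have hT : 0 < T := by positivity
    refine (lt_of_mul_lt_mul_left ?_ hT.le).le
    nlinarith [L.neg_two_mul_mul_apply_le T ν, le_mul_of_one_le_left hX hN]
  have hcoord : ∀ i, |ν i| ≤ R := fun i => by
    calc |ν i| ≤ ν i ^ 2 := by nlinarith [abs_mul_abs_self (ν i), abs_nonneg (ν i)]
      _ ≤ ∑ j, ν j ^ 2 := single_le_sum (fun j _ => sq_nonneg (ν j)) (mem_univ i)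
      _ ≤ 2 * c * -B ν ν := hsum
      _ ≤ R := mul_le_mul_of_nonneg_left hbound (by positivity)
  exact ⟨fun i => (abs_le.mp (hcoord i)).1, fun i => (abs_le.mp (hcoord i)).2⟩

namespace GammaTilde

section Semigroup

variable {Λ : Type*} [AddCommGroup Λ] (b : Λ → Λ → ℤ)

theorem isPlus_gtMul {g h : ℤ × Λ × Λ × ℤ} (hg : isPlus g) (hh : isPlus h) :
    isPlus (gtMul b g h) := by
  have nonneg : ∀ {g : ℤ × Λ × Λ × ℤ}, isPlus g → 0 ≤ g.2.2.2 := by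
    rintro g (⟨_, _, rfl⟩ | hg)
    exacts [le_rfl, hg.le]
  rcases hg with ⟨a, lam, rfl⟩ | hg
  · rcases hh with ⟨a', lam', rfl⟩ | hh
    · exact Or.inl ⟨_, _, Prod.ext rfl (Prod.ext rfl (by simp [gtMul]))⟩
    · exact Or.inr (by simpa [gtMul] using hh)
  · exact Or.inr (by simp only [gtMul]; linarith [nonneg hh])

theorem isPlus_of_isGamma0 {g : ℤ × Λ × Λ × ℤ} : isGamma0 g → isPlus g :=
  fun ⟨ν, hν⟩ => Or.inl ⟨0, ν, hν⟩

end Semigroup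

section Group

variable {Λ : Type*} [AddCommGroup Λ]

def lat (ν : Λ) : ℤ × Λ × Λ × ℤ := (0, ν, 0, 0)

/-- `cⁿ` for the central element `c = (1, 0, 0, 0)`. -/
def central (n : ℤ) : ℤ × Λ × Λ × ℤ := (n, 0, 0, 0)

variable (B : Λ →ₗ[ℤ] Λ →ₗ[ℤ] ℤ)

local infixl:70 " ⋆ " => gtMul (fun x y => B x y)

theorem gtMul_assoc (p q r : ℤ × Λ × Λ × ℤ) : p ⋆ q ⋆ r = p ⋆ (q ⋆ r) := by
  simp only [gtMul, map_add, map_zsmul, LinearMap.add_apply, LinearMap.smul_apply, smul_eq_mul,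
    Prod.mk.injEq]
  refine ⟨by ring, by abel, by module, by ring⟩

theorem gtMul_left_cancel {p q q' : ℤ × Λ × Λ × ℤ} (h : p ⋆ q = p ⋆ q') : q = q' := by
  simp only [gtMul, Prod.mk.injEq] at h
  obtain ⟨h₁, h₂, h₃, h₄⟩ := h
  have hlam := add_left_cancel h₂
  have hk := add_left_cancel h₄
  rw [hlam] at h₁ h₃
  have hμ : q.2.2.1 = q'.2.2.1 := by simpa using h₃
  rw [hμ] at h₁
  exact Prod.ext (by linarith) (Prod.ext hlam (Prod.ext hμ hk))

theorem lat_mul_lat (ν ν' : Λ) : lat ν ⋆ lat ν' = lat (ν + ν') := by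
  simp [gtMul, lat]

theorem lat_zero_mul (g : ℤ × Λ × Λ × ℤ) : lat 0 ⋆ g = g := by
  simp [gtMul, lat]

theorem gtMul_lat_zero (g : ℤ × Λ × Λ × ℤ) : g ⋆ lat 0 = g := by
  simp [gtMul, lat]

theorem central_zero_mul (g : ℤ × Λ × Λ × ℤ) : central 0 ⋆ g = g := by
  simp [gtMul, central]

theorem lat_mul_comm_mk_zero (ν lam : Λ) (a : ℤ) :
    lat ν ⋆ (a, lam, 0, 0) = (a, lam, 0, 0) ⋆ lat ν := by
  simp [gtMul, lat, add_comm]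

theorem mk_zero_mul_lat_mul (a : ℤ) (lam ν : Λ) (y : ℤ × Λ × Λ × ℤ) :
    (a, lam, 0, 0) ⋆ lat ν ⋆ y = lat (lam + ν) ⋆ (central a ⋆ y) := by
  simp only [gtMul, lat, central, zero_smul, map_add, map_zero, LinearMap.add_apply,
    LinearMap.zero_apply, Prod.mk.injEq]
  refine ⟨by ring, by abel, by simp, by ring⟩

theorem mul_lat_mul_mk_zero (x : ℤ × Λ × Λ × ℤ) (ν lam : Λ) (a : ℤ) :
    x ⋆ lat ν ⋆ (a, lam, 0, 0) = central a ⋆ x ⋆ lat (ν + lam) := by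
  simp only [gtMul, lat, central, map_add, map_zero, map_zsmul, LinearMap.add_apply,
    LinearMap.zero_apply, LinearMap.smul_apply, smul_eq_mul, Prod.mk.injEq]
  refine ⟨by ring, by abel, by module, by ring⟩

theorem lat_mul_mul_lat_injective [IsAddTorsionFree Λ] {g : ℤ × Λ × Λ × ℤ} (hg : g.2.2.2 ≠ 0)
    {ν₁ ν₂ ν₁' ν₂' : Λ} (h : lat ν₁ ⋆ g ⋆ lat ν₂ = lat ν₁' ⋆ g ⋆ lat ν₂') :
    ν₁ = ν₁' ∧ ν₂ = ν₂' := by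
  simp only [gtMul, lat, Prod.mk.injEq] at h
  obtain ⟨-, h₂, h₃, -⟩ := h
  have hν₂ : ν₂ = ν₂' := (zsmul_right_inj (by simpa using hg)).mp (by simpa using h₃)
  subst hν₂
  exact ⟨by simpa using h₂, rfl⟩

theorem mul_eq_lat_mul_mul_lat (x y : ℤ × Λ × Λ × ℤ) (ν₁ ν₂ ν₃ ν₄ : Λ) :
    lat ν₁ ⋆ x ⋆ lat ν₂ ⋆ (lat ν₃ ⋆ y ⋆ lat ν₄) = lat ν₁ ⋆ (x ⋆ lat (ν₂ + ν₃) ⋆ y) ⋆ lat ν₄ := by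
  simp only [gtMul_assoc]
  rw [← gtMul_assoc B (lat ν₂), lat_mul_lat]

theorem mem_dcoset_iff {p g : ℤ × Λ × Λ × ℤ} :
    p ∈ dcoset (fun x y => B x y) g ↔ ∃ ν₁ ν₂ : Λ, p = lat ν₁ ⋆ g ⋆ lat ν₂ :=
  Iff.rfl

theorem lat_mul_mul_lat_mem_dcoset {s g : ℤ × Λ × Λ × ℤ} (hs : s ∈ dcoset (fun x y => B x y) g)
    (ν₁ ν₂ : Λ) : lat ν₁ ⋆ s ⋆ lat ν₂ ∈ dcoset (fun x y => B x y) g := by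
  obtain ⟨μ₁, μ₂, rfl⟩ := (mem_dcoset_iff B).1 hs
  refine (mem_dcoset_iff B).2 ⟨ν₁ + μ₁, μ₂ + ν₂, ?_⟩
  simp only [← lat_mul_lat B, gtMul_assoc]

def dcosetInv (g : ℤ × Λ × Λ × ℤ) : ℤ :=
  g.2.2.2 * g.1 - g.2.2.2 * B g.2.1 g.2.2.1 + B g.2.2.1 g.2.2.1

theorem dcosetInv_lat_mul (ν : Λ) (g : ℤ × Λ × Λ × ℤ) :
    dcosetInv B (lat ν ⋆ g) = dcosetInv B g := by
  simp only [dcosetInv, gtMul, lat, map_add, map_zero, LinearMap.add_apply, LinearMap.zero_apply,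
    zero_add, add_zero, sub_zero, zero_mul, zero_smul]
  ring

theorem dcosetInv_mul_lat (g : ℤ × Λ × Λ × ℤ) (ν : Λ) :
    dcosetInv B (g ⋆ lat ν) = dcosetInv B g := by
  simp only [dcosetInv, gtMul, lat, map_add, map_zero, map_zsmul, LinearMap.add_apply,
    LinearMap.smul_apply, smul_eq_mul, add_zero]
  ring

theorem dcosetInv_of_mem_dcoset {p g : ℤ × Λ × Λ × ℤ} (h : p ∈ dcoset (fun x y => B x y) g) :
    dcosetInv B p = dcosetInv B g := by
  obtain ⟨ν₁, ν₂, rfl⟩ := (mem_dcoset_iff B).1 h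
  rw [dcosetInv_mul_lat, dcosetInv_lat_mul]

theorem dcosetInv_central_mul (n : ℤ) (g : ℤ × Λ × Λ × ℤ) :
    dcosetInv B (central n ⋆ g) = g.2.2.2 * n + dcosetInv B g := by
  simp only [dcosetInv, gtMul, central, map_zero, LinearMap.zero_apply, add_zero, sub_zero,
    mul_zero, zero_add, zero_smul]
  ring

theorem exists_mem_dcoset_central_mul {g g' : ℤ × Λ × Λ × ℤ} (hk : g.2.2.2 = g'.2.2.2) {w : Λ}
    (hμ : g.2.2.1 = g'.2.2.1 + g.2.2.2 • w) :
    ∃ t : ℤ, g ∈ dcoset (fun x y => B x y) (central t ⋆ g') := by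
  obtain ⟨a, lam, mu, k⟩ := g
  obtain ⟨a', lam', mu', k'⟩ := g'
  dsimp only at hk hμ
  subst hk hμ
  refine ⟨a - a' - B (lam - lam' - w) mu' + B mu' w - k * B (lam - w) w, lam - lam' - w, w, ?_⟩
  simp only [gtMul, central, Prod.mk.injEq, map_add, map_sub, map_zero, LinearMap.add_apply,
    LinearMap.sub_apply, LinearMap.zero_apply, add_zero, sub_zero, mul_zero, zero_add, zero_smul,
    and_true]
  constructor
  · ring
  · abel

theorem dcosetInv_mul_lat_mul (x y : ℤ × Λ × Λ × ℤ) : ∃ L : Λ →ₗ[ℤ] ℤ, ∀ ν : Λ,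
    dcosetInv B (x ⋆ lat ν ⋆ y) = dcosetInv B (x ⋆ y) + (L ν - x.2.2.2 * y.2.2.2 * B ν ν) := by
  obtain ⟨a, lam, mu, k⟩ := x
  obtain ⟨a', lam', mu', k'⟩ := y
  set K := k + k'
  set M₀ := mu + mu' + k • lam'
  refine ⟨K • (k • B lam - B mu + B.flip mu') - K • B.flip M₀ - (K * k) • B (lam + lam')
    + k • B M₀ + k • B.flip M₀, fun ν => ?_⟩
  simp only [dcosetInv, gtMul, lat, M₀, K, map_add, map_zero, map_zsmul, LinearMap.add_apply,
    LinearMap.sub_apply, LinearMap.smul_apply, LinearMap.flip_apply, smul_eq_mul, add_zero]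
  ring

/-- The element `(a, 0, μ, K)` with the largest `a` whose invariant `dcosetInv` is at most `m`. -/
def floorRep (m : ℤ) (μ : Λ) (K : ℤ) : ℤ × Λ × Λ × ℤ := ((m - B μ μ) / K, 0, μ, K)

theorem exists_mem_dcoset_central_mul_floorRep {K : ℤ} (hK : 0 < K) {g : ℤ × Λ × Λ × ℤ}
    (hk : g.2.2.2 = K) {μ w : Λ} (hμ : g.2.2.1 = μ + K • w) {m : ℤ}
    (hm : m ≤ dcosetInv B g) :
    ∃ n : ℕ, g ∈ dcoset (fun x y => B x y) (central n ⋆ floorRep B m μ K) := by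
  obtain ⟨t, ht⟩ := exists_mem_dcoset_central_mul B (g' := floorRep B m μ K) hk (w := w)
    (by rw [hμ, hk]; rfl)
  have hinv : dcosetInv B g = K * t + dcosetInv B (floorRep B m μ K) :=
    (dcosetInv_of_mem_dcoset B ht).trans (dcosetInv_central_mul B t _)
  have hrep : dcosetInv B (floorRep B m μ K) = K * ((m - B μ μ) / K) + B μ μ := by
    simp [dcosetInv, floorRep]
  have hfloor := Int.mul_ediv_self_le (x := m - B μ μ) hK.ne'
  have ht : 0 ≤ t := by nlinarith
  exact ⟨t.toNat, by rwa [Int.toNat_of_nonneg ht]⟩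

theorem gtFiberRel_of_fst_eq_mul_lat {X Y : Set (ℤ × Λ × Λ × ℤ)} {z : ℤ × Λ × Λ × ℤ}
    {t t' : {pq : (ℤ × Λ × Λ × ℤ) × (ℤ × Λ × Λ × ℤ) //
      pq.1 ∈ X ∧ pq.2 ∈ Y ∧ pq.1 ⋆ pq.2 = z}} {ν : Λ} (h : t'.1.1 = t.1.1 ⋆ lat ν) :
    gtFiberRel (fun x y => B x y) X Y z t t' := by
  refine ⟨-ν, by rw [h, neg_neg]; rfl, ?_⟩
  have hq : t.1.2 = lat ν ⋆ t'.1.2 := by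
    apply gtMul_left_cancel B (p := t.1.1)
    rw [t.2.2.2, ← gtMul_assoc, ← h, t'.2.2.2]
  change t'.1.2 = lat (-ν) ⋆ t.1.2
  rw [hq, ← gtMul_assoc, lat_mul_lat, neg_add_cancel, lat_zero_mul]

def leftFactors (x y z : ℤ × Λ × Λ × ℤ) : Set Λ :=
  {ν₁ | ∃ ν ν₄ : Λ, lat ν₁ ⋆ (x ⋆ lat ν ⋆ y) ⋆ lat ν₄ = z}

theorem finite_quot_gtFiberRel_of_finite {X Y : Set (ℤ × Λ × Λ × ℤ)} {z : ℤ × Λ × Λ × ℤ}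
    {T : Set (ℤ × Λ × Λ × ℤ)} (hT : T.Finite)
    (hcov : ∀ p q, p ∈ X → q ∈ Y → p ⋆ q = z → ∃ t ∈ T, ∃ ν, p = t ⋆ lat ν) :
    Finite (Quot (gtFiberRel (fun x y => B x y) X Y z)) := by
  have := hT.to_subtype
  refine Quot.finite_of_forall_exists (fun (t : T) pq => ∃ ν, pq.1.1 = t.1 ⋆ lat ν)
    (fun pq => ?_) ?_
  · obtain ⟨t, ht, ν, h⟩ := hcov _ _ pq.2.1 pq.2.2.1 pq.2.2.2
    exact ⟨⟨t, ht⟩, ν, h⟩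
  · rintro t pq pq' ⟨ν, h⟩ ⟨ν', h'⟩
    apply gtFiberRel_of_fst_eq_mul_lat B (ν := -ν + ν')
    rw [h', h, gtMul_assoc, lat_mul_lat, add_neg_cancel_left]

theorem finite_quot_gtFiberRel_mk_zero (a : ℤ) (lam : Λ) (Y : Set (ℤ × Λ × Λ × ℤ))
    (z : ℤ × Λ × Λ × ℤ) :
    Finite (Quot (gtFiberRel (fun x y => B x y)
      (dcoset (fun x y => B x y) (a, lam, 0, 0)) Y z)) := by
  refine finite_quot_gtFiberRel_of_finite B (Set.finite_singleton (a, lam, 0, 0))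
    fun p q hp _ _ => ?_
  obtain ⟨ν₁, ν₂, rfl⟩ := (mem_dcoset_iff B).1 hp
  exact ⟨_, rfl, ν₁ + ν₂, by rw [lat_mul_comm_mk_zero, gtMul_assoc, lat_mul_lat]⟩

theorem finite_quot_gtFiberRel_of_finite_leftFactors {x y z : ℤ × Λ × Λ × ℤ}
    (h : (leftFactors B x y z).Finite) :
    Finite (Quot (gtFiberRel (fun x y => B x y) (dcoset (fun x y => B x y) x)
      (dcoset (fun x y => B x y) y) z)) := by
  refine finite_quot_gtFiberRel_of_finite B (h.image fun ν₁ => lat ν₁ ⋆ x)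
    fun p q hp hq hpq => ?_
  obtain ⟨ν₁, ν₂, rfl⟩ := (mem_dcoset_iff B).1 hp
  obtain ⟨ν₃, ν₄, rfl⟩ := (mem_dcoset_iff B).1 hq
  rw [mul_eq_lat_mul_mul_lat] at hpq
  exact ⟨_, ⟨ν₁, ⟨_, _, hpq⟩, rfl⟩, ν₂, rfl⟩

theorem subsingleton_setOf_lat_mul_mul_lat_eq [IsAddTorsionFree Λ] {g : ℤ × Λ × Λ × ℤ}
    (hg : g.2.2.2 ≠ 0) (z : ℤ × Λ × Λ × ℤ) :
    {ν₁ : Λ | ∃ ν₂, lat ν₁ ⋆ g ⋆ lat ν₂ = z}.Subsingleton := by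
  rintro ν₁ ⟨ν₂, h⟩ ν₁' ⟨ν₂', h'⟩
  exact (lat_mul_mul_lat_injective B hg (h.trans h'.symm)).1

theorem leftFactors_mk_zero_subsingleton [IsAddTorsionFree Λ] {x : ℤ × Λ × Λ × ℤ}
    (hx : x.2.2.2 ≠ 0) (a : ℤ) (lam : Λ) (z : ℤ × Λ × Λ × ℤ) :
    (leftFactors B x (a, lam, 0, 0) z).Subsingleton := by
  refine (subsingleton_setOf_lat_mul_mul_lat_eq B (g := central a ⋆ x)
    (by simpa [gtMul, central] using hx) z).anti ?_
  rintro ν₁ ⟨ν, ν₄, h⟩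
  refine ⟨ν + lam + ν₄, ?_⟩
  rw [← h, mul_lat_mul_mk_zero]
  simp only [gtMul_assoc, lat_mul_lat]

/-- Property (1') for the elements of `S`. -/
def HasFiniteCentralCover (S : Set (ℤ × Λ × Λ × ℤ)) : Prop :=
  ∃ F : Finset (ℤ × Λ × Λ × ℤ), (∀ f ∈ F, isPlus f) ∧
    ∀ s ∈ S, ∃ n : ℕ, ∃ f ∈ F, s ∈ dcoset (fun x y => B x y) (central n ⋆ f)

theorem exists_finset_of_hasFiniteCentralCover {x y : ℤ × Λ × Λ × ℤ}
    (h : HasFiniteCentralCover B (Set.range fun ν => x ⋆ lat ν ⋆ y)) :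
    ∃ F : Finset (ℤ × Λ × Λ × ℤ), (∀ f ∈ F, isPlus f) ∧
      ∀ p q, p ∈ dcoset (fun x y => B x y) x → q ∈ dcoset (fun x y => B x y) y →
        ∃ n : ℕ, ∃ f ∈ F, p ⋆ q ∈ dcoset (fun x y => B x y) (((n : ℤ), 0, 0, 0) ⋆ f) := by
  obtain ⟨F, hF, hcover⟩ := h
  refine ⟨F, hF, fun p q hp hq => ?_⟩
  obtain ⟨ν₁, ν₂, rfl⟩ := (mem_dcoset_iff B).1 hp
  obtain ⟨ν₃, ν₄, rfl⟩ := (mem_dcoset_iff B).1 hq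
  obtain ⟨n, f, hf, hmem⟩ := hcover _ ⟨ν₂ + ν₃, rfl⟩
  rw [mul_eq_lat_mul_mul_lat]
  exact ⟨n, f, hf, lat_mul_mul_lat_mem_dcoset B hmem ν₁ ν₄⟩

theorem hasFiniteCentralCover_mk_zero_mul (a : ℤ) (lam : Λ) {y : ℤ × Λ × Λ × ℤ}
    (hy : isPlus y) : HasFiniteCentralCover B (Set.range fun ν => (a, lam, 0, 0) ⋆ lat ν ⋆ y) := by
  refine ⟨{central a ⋆ y}, ?_, ?_⟩
  · simp only [mem_singleton, forall_eq]
    exact isPlus_gtMul _ (Or.inl ⟨a, 0, rfl⟩) hy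
  rintro _ ⟨ν, rfl⟩
  dsimp only
  refine ⟨0, _, mem_singleton_self _, (mem_dcoset_iff B).2 ⟨lam + ν, 0, ?_⟩⟩
  rw [mk_zero_mul_lat_mul, Nat.cast_zero, central_zero_mul, gtMul_lat_zero]

theorem hasFiniteCentralCover_mul_mk_zero {x : ℤ × Λ × Λ × ℤ} (hx : isPlus x) (a : ℤ)
    (lam : Λ) : HasFiniteCentralCover B (Set.range fun ν => x ⋆ lat ν ⋆ (a, lam, 0, 0)) := by
  refine ⟨{central a ⋆ x}, ?_, ?_⟩
  · simp only [mem_singleton, forall_eq]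
    exact isPlus_gtMul _ (Or.inl ⟨a, 0, rfl⟩) hx
  rintro _ ⟨ν, rfl⟩
  dsimp only
  refine ⟨0, _, mem_singleton_self _, (mem_dcoset_iff B).2 ⟨0, ν + lam, ?_⟩⟩
  rw [mul_lat_mul_mk_zero, Nat.cast_zero, central_zero_mul, lat_zero_mul]

end Group

section Lattice

variable {n : Type*} [Fintype n] [DecidableEq n] (B : (n → ℤ) →ₗ[ℤ] (n → ℤ) →ₗ[ℤ] ℤ)

local infixl:70 " ⋆ " => gtMul (fun x y => B x y)

theorem hasFiniteCentralCover_of_pos (hB : ∀ ν, ν ≠ 0 → B ν ν < 0)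
    {x y : ℤ × (n → ℤ) × (n → ℤ) × ℤ} (hx : 0 < x.2.2.2) (hy : 0 < y.2.2.2) :
    HasFiniteCentralCover B (Set.range fun ν => x ⋆ lat ν ⋆ y) := by
  obtain ⟨L, hL⟩ := dcosetInv_mul_lat_mul B x y
  obtain ⟨m, hm⟩ : BddBelow (Set.range fun ν => dcosetInv B (x ⋆ lat ν ⋆ y)) := by
    simp_rw [hL]
    exact (tendsto_atTop_add_const_left _ _ (tendsto_sub_mul_apply_self_cofinite B hB L
      (mul_pos hx hy))).isBoundedUnder_ge_atTop.bddBelow_range_of_cofinite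
  have hK : 0 < x.2.2.2 + y.2.2.2 := by positivity
  refine ⟨(Fintype.piFinset fun _ => Ico 0 (x.2.2.2 + y.2.2.2)).image fun r =>
    floorRep B m (x ⋆ lat r ⋆ y).2.2.1 (x.2.2.2 + y.2.2.2), ?_, ?_⟩
  · simp only [mem_image]
    rintro _ ⟨r, -, rfl⟩
    exact Or.inr hK
  rintro _ ⟨ν, rfl⟩
  obtain ⟨r, hr, w, rfl⟩ := exists_mem_piFinset_Ico_add_smul hK ν
  have hμ : (x ⋆ lat (r + (x.2.2.2 + y.2.2.2) • w) ⋆ y).2.2.1 =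
      (x ⋆ lat r ⋆ y).2.2.1 + (x.2.2.2 + y.2.2.2) • x.2.2.2 • w := by
    simp only [gtMul, lat, add_zero, smul_add]
    module
  obtain ⟨t, ht⟩ := exists_mem_dcoset_central_mul_floorRep B hK (by simp [gtMul, lat]) hμ
    (hm ⟨_, rfl⟩)
  exact ⟨t, _, mem_image_of_mem _ hr, ht⟩

theorem finite_leftFactors_of_pos (hB : ∀ ν, ν ≠ 0 → B ν ν < 0)
    {x y : ℤ × (n → ℤ) × (n → ℤ) × ℤ} (hx : 0 < x.2.2.2) (hy : 0 < y.2.2.2)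
    (z : ℤ × (n → ℤ) × (n → ℤ) × ℤ) : (leftFactors B x y z).Finite := by
  obtain ⟨L, hL⟩ := dcosetInv_mul_lat_mul B x y
  have hS : {ν | dcosetInv B (x ⋆ lat ν ⋆ y) ≤ dcosetInv B z}.Finite := by
    simp_rw [hL]
    have := (tendsto_atTop_add_const_left _ (dcosetInv B (x ⋆ y))
      (tendsto_sub_mul_apply_self_cofinite B hB L (mul_pos hx hy))).eventually_gt_atTop
      (dcosetInv B z)
    simpa using this
  refine (hS.biUnion fun ν _ => (subsingleton_setOf_lat_mul_mul_lat_eq B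
    (g := x ⋆ lat ν ⋆ y) ?_ z).finite).subset ?_
  · simp only [gtMul, lat]
    omega
  rintro ν₁ ⟨ν, ν₄, h⟩
  refine Set.mem_biUnion (x := ν) ?_ ⟨ν₄, h⟩
  rw [Set.mem_ofPred_eq, ← h, dcosetInv_mul_lat, dcosetInv_lat_mul]

end Lattice

end GammaTilde

/-- For a `ℤ`-bilinear form `B` on `ℤ^l` with negative definite symmetrization, `Γ̃⁺` is a
sub-semigroup of `Γ̃` containing `Γ̃₀`, and the pair `(Γ̃⁺, Γ̃₀)` is almost good: for all
`x, y ∈ Γ̃⁺`, (1') there is a finite set `F ⊆ Γ̃⁺` such that every product `p·q` with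
`p ∈ Γ̃₀xΓ̃₀`, `q ∈ Γ̃₀yΓ̃₀` lies in `Γ̃₀·cⁿ·f·Γ̃₀` for some `n ≥ 0` and `f ∈ F`
(where `c = (1,0,0,0)`, so `cⁿ·f = (n,0,0,0)·f`), and (2) all fibers of the multiplication
map are finite. -/
theorem stmt13 {l : ℕ} (B : (Fin l → ℤ) →ₗ[ℤ] (Fin l → ℤ) →ₗ[ℤ] ℤ)
    (hneg : ∀ ν : Fin l → ℤ, ν ≠ 0 → B ν ν + B ν ν < 0) :
    (∀ g h : ℤ × (Fin l → ℤ) × (Fin l → ℤ) × ℤ,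
      isPlus g → isPlus h → isPlus (gtMul (fun x y => B x y) g h)) ∧
    (∀ g : ℤ × (Fin l → ℤ) × (Fin l → ℤ) × ℤ, isGamma0 g → isPlus g) ∧
    ∀ x y : ℤ × (Fin l → ℤ) × (Fin l → ℤ) × ℤ, isPlus x → isPlus y →
      (∃ F : Finset (ℤ × (Fin l → ℤ) × (Fin l → ℤ) × ℤ),
        (∀ f ∈ F, isPlus f) ∧
        ∀ p q : ℤ × (Fin l → ℤ) × (Fin l → ℤ) × ℤ,
          p ∈ dcoset (fun x y => B x y) x → q ∈ dcoset (fun x y => B x y) y →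
          ∃ n : ℕ, ∃ f ∈ F,
            gtMul (fun x y => B x y) p q ∈
              dcoset (fun x y => B x y)
                (gtMul (fun x y => B x y)
                  ((n : ℤ), (0 : Fin l → ℤ), (0 : Fin l → ℤ), (0 : ℤ)) f)) ∧
      ∀ z : ℤ × (Fin l → ℤ) × (Fin l → ℤ) × ℤ,
        Finite (Quot (gtFiberRel (fun x y => B x y)
          (dcoset (fun x y => B x y) x) (dcoset (fun x y => B x y) y) z)) := by
  have hB : ∀ ν, ν ≠ 0 → B ν ν < 0 := fun ν hν => by linarith [hneg ν hν]
  refine ⟨fun g h => GammaTilde.isPlus_gtMul _, fun g => GammaTilde.isPlus_of_isGamma0,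
    fun x y hx hy => ⟨GammaTilde.exists_finset_of_hasFiniteCentralCover B ?_, fun z => ?_⟩⟩
  · rcases hx with ⟨a, lam, rfl⟩ | hx
    · exact GammaTilde.hasFiniteCentralCover_mk_zero_mul B a lam hy
    rcases hy with ⟨a', lam', rfl⟩ | hy
    · exact GammaTilde.hasFiniteCentralCover_mul_mk_zero B (Or.inr hx) a' lam'
    · exact GammaTilde.hasFiniteCentralCover_of_pos B hB hx hy
  · rcases hx with ⟨a, lam, rfl⟩ | hx
    · exact GammaTilde.finite_quot_gtFiberRel_mk_zero B a lam _ z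
    apply GammaTilde.finite_quot_gtFiberRel_of_finite_leftFactors
    rcases hy with ⟨a', lam', rfl⟩ | hy
    · exact (GammaTilde.leftFactors_mk_zero_subsingleton B hx.ne' a' lam' z).finite
    · exact GammaTilde.finite_leftFactors_of_pos B hB hx hy z
end

section
/- Let b : ℤ^l × ℤ^l → ℤ be a ℤ-bilinear form and Q(λ,μ) = b(λ,μ) + b(μ,λ). For ν ∈ ℤ^l define the map φ_ν : ℂˣ × (ℂˣ)^l × ℂˣ → ℂˣ × (ℂˣ)^l × ℂˣ by φ_ν(t, x, v) = ( t · (∏_{i=1}^{l} x_i^{ν_i}) · v^{b(ν,ν)}, ( v^{Q(ν,e_i)} · x_i )_{i=1,…,l}, v ), where e_1,…,e_l is the standard basis of ℤ^l. Then φ_0 is the identity and φ_ν ∘ φ_{ν'} = φ_{ν+ν'} for all ν, ν' ∈ ℤ^l; i.e. these formulas define an action of the additive group ℤ^l on the torus ℂˣ × (ℂˣ)^l × ℂˣ. -/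
/-!
Twisting `x` by `ν'` multiplies `∏ xᵢ^{νᵢ}` by `v^{Q(ν',ν)}`, since `Q(ν', ·)` is linear; together
with `b(ν+ν', ν+ν') = b(ν,ν) + Q(ν',ν) + b(ν',ν')` this makes the first coordinate compose
correctly, while the middle coordinates compose because `Q` is additive in its first argument.
-/

open Finset

theorem zpow_sum {G ι : Type*} [CommGroup G] (v : G) (s : Finset ι) (f : ι → ℤ) :
    v ^ (∑ i ∈ s, f i) = ∏ i ∈ s, v ^ f i := by
  induction s using Finset.cons_induction with
  | empty => simp
  | cons a s ha ih => rw [sum_cons, prod_cons, zpow_add, ih]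

theorem LinearMap.apply_eq_sum_single {ι R M : Type*} [Fintype ι] [DecidableEq ι] [Semiring R]
    [AddCommMonoid M] [Module R M] (f : (ι → R) →ₗ[R] M) (x : ι → R) :
    f x = ∑ i, x i • f (Pi.single i 1) := by
  conv_lhs => rw [pi_eq_sum_univ' x]
  simp only [map_sum, map_smul]

section TorusShift

variable {l : ℕ} (b : (Fin l → ℤ) →ₗ[ℤ] (Fin l → ℤ) →ₗ[ℤ] ℤ)

theorem sum_mul_apply_single_add_apply_single (μ ν : Fin l → ℤ) :
    ∑ i, ν i * (b μ (Pi.single i 1) + b (Pi.single i 1) μ) = b μ ν + b ν μ := by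
  simpa using ((b + b.flip) μ).apply_eq_sum_single ν |>.symm

variable {G : Type*} [CommGroup G]

def torusShift (ν : Fin l → ℤ) (p : G × (Fin l → G) × G) : G × (Fin l → G) × G :=
  (p.1 * (∏ i, p.2.1 i ^ ν i) * p.2.2 ^ b ν ν,
   fun i => p.2.2 ^ (b ν (Pi.single i 1) + b (Pi.single i 1) ν) * p.2.1 i,
   p.2.2)

theorem torusShift_zero (p : G × (Fin l → G) × G) : torusShift b 0 p = p := by
  simp [torusShift]

theorem prod_zpow_twisted (x : Fin l → G) (v : G) (μ ν : Fin l → ℤ) :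
    ∏ i, (v ^ (b μ (Pi.single i 1) + b (Pi.single i 1) μ) * x i) ^ ν i
      = v ^ (b μ ν + b ν μ) * ∏ i, x i ^ ν i := by
  simp only [mul_zpow, ← zpow_mul, prod_mul_distrib, ← zpow_sum, mul_comm _ (ν _),
    sum_mul_apply_single_add_apply_single]

theorem torusShift_torusShift (ν ν' : Fin l → ℤ) (p : G × (Fin l → G) × G) :
    torusShift b ν (torusShift b ν' p) = torusShift b (ν + ν') p := by
  obtain ⟨t, x, v⟩ := p
  simp only [torusShift, prod_zpow_twisted]
  simp only [map_add, LinearMap.add_apply, Pi.add_apply, zpow_add, prod_mul_distrib,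
    Prod.mk.injEq, and_true]
  constructor
  · ac_rfl
  · funext i
    ac_rfl

end TorusShift

/-- For a `ℤ`-bilinear form `b` on `ℤ^l`, the maps
`φ_ν(t, x, v) = (t · ∏ᵢ xᵢ^{νᵢ} · v^{b(ν,ν)}, (v^{Q(ν,eᵢ)} · xᵢ)ᵢ, v)` (with
`Q(λ,μ) = b(λ,μ) + b(μ,λ)` and `eᵢ` the standard basis) satisfy `φ_0 = id` and
`φ_ν ∘ φ_{ν'} = φ_{ν+ν'}`, i.e. they define an action of the additive group `ℤ^l` on the
torus `ℂˣ × (ℂˣ)^l × ℂˣ`. -/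
theorem stmt14 {l : ℕ} (b : (Fin l → ℤ) →ₗ[ℤ] (Fin l → ℤ) →ₗ[ℤ] ℤ) :
    let φ : (Fin l → ℤ) → ℂˣ × (Fin l → ℂˣ) × ℂˣ → ℂˣ × (Fin l → ℂˣ) × ℂˣ :=
      fun ν p =>
        (p.1 * (∏ i, p.2.1 i ^ ν i) * p.2.2 ^ b ν ν,
         fun i => p.2.2 ^ (b ν (Pi.single i 1) + b (Pi.single i 1) ν) * p.2.1 i,
         p.2.2)
    (∀ p, φ 0 p = p) ∧ ∀ ν ν' : Fin l → ℤ, φ ν ∘ φ ν' = φ (ν + ν') :=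
  ⟨torusShift_zero b, fun ν ν' => funext (torusShift_torusShift (G := ℂˣ) b ν ν')⟩
end
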